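/- Let (aₙ) ⊂ H and R ∈ [0,∞] with 1/R = limsup |aₙ|^{1/n}, and let p ∈ H. Then the series ∑ₙ (q-p)^{*n} aₙ converges absolutely at every q with σ(q,p) < R, and does not converge at any q with σ(q,p) > R. -/

import Mathlib

local notation "ℍ" => Quaternion ℝ

/-- Convolution (star) product of coefficient sequences. -/
noncomputable def conv (a b : ℕ → ℍ) : ℕ → ℍ := fun n => ∑ k ∈ Finset.range (n+1), a k * b (n-k)

/-- Coefficient sequence of the polynomial `q - p` (right coefficients). -/
noncomputable def binomSeq (p : ℍ) : ℕ → ℍ := fun k => if k = 0 then -p else if k = 1 then 1 else 0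

/-- n-fold star (convolution) power of a coefficient sequence. -/
noncomputable def convPow (a : ℕ → ℍ) : ℕ → ℕ → ℍ
  | 0 => fun k => if k = 0 then 1 else 0
  | n+1 => conv (convPow a n) a

/-- The regular power `(q-p)^{*n}` evaluated at `q`. -/
noncomputable def starPow (p : ℍ) (n : ℕ) (q : ℍ) : ℍ :=
  ∑ k ∈ Finset.range (n+1), q^k * convPow (binomSeq p) n k

noncomputable def omegaDist (q p : ℍ) : ℝ :=
  Real.sqrt ((q.re - p.re)^2 + (‖q.im‖ + ‖p.im‖)^2)

/-- `q` and `p` lie in a common complex line `L_I = ℝ + Iℝ`. -/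
def SameLine (q p : ℍ) : Prop :=
  ∃ I : ℍ, I^2 = -1 ∧ (∃ a b : ℝ, q = (a : ℍ) + b • I) ∧ (∃ a b : ℝ, p = (a : ℍ) + b • I)

open Classical in
noncomputable def sigmaDist (q p : ℍ) : ℝ :=
  if SameLine q p then ‖q - p‖ else omegaDist q p

/-!
On a common complex line `(q-p)^{*n} = (q-p)^n`. Otherwise write `q = x + y I`, `p = u + v J`
with `y, v > 0`, imaginary units `J ≠ ±I`, and put `z = x + i y`, `w = u + i v`, so that
`σ(q,p) = |z - w̄| > |z - w|`. Splitting `(-p)^m = Re (-w)^m + Im (-w)^m J` in the binomial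
expansion of `(q-p)^{*n}` gives `(q-p)^{*n} = E + F J` with `E, F ∈ ℝ + ℝ I` the images of
`((z-w)^n ± (z-w̄)^n) / 2` (divided by `i` for `F`), hence `‖(q-p)^{*n}‖ ≤ 2 σ^n`. As
`X ↦ X + I X I` kills `ℝ + ℝ I`, also `‖J + I J I‖ |F| ≤ 2 ‖(q-p)^{*n}‖` with `J + I J I ≠ 0`,
so `‖(q-p)^{*n}‖ ≥ c σ^n` for large `n`. With these two estimates the claim is the
Cauchy–Hadamard theorem for the real power series `∑ ‖aₙ‖ tⁿ`.
-/

open Filter Polynomial FormalMultilinearSeries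
open scoped NNReal ENNReal ComplexConjugate

section CauchyHadamard

variable {A : Type*}

theorem radius_ofScalars_norm_eq [SeminormedAddCommGroup A] {a : ℕ → A} {R : ℝ≥0∞}
    (hR : R⁻¹ = limsup (fun n : ℕ => (‖a n‖₊ : ℝ≥0∞) ^ (1 / (n : ℝ))) atTop) :
    (ofScalars ℝ fun n => ‖a n‖).radius = R := by
  rw [← inv_inj, hR, radius_inv_eq_limsup]
  congr with n
  have : ‖ofScalars ℝ (fun n => ‖a n‖) n‖₊ = ‖a n‖₊ := by ext; simp
  rw [this, ENNReal.coe_rpow_of_nonneg _ (by positivity)]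

theorem summable_norm_mul_of_norm_le_pow [SeminormedRing A] {S a : ℕ → A} {C σ : ℝ}
    (hS : ∀ n, ‖S n‖ ≤ C * σ ^ n) (hσ₀ : 0 ≤ σ)
    (hσ : ENNReal.ofReal σ < (ofScalars ℝ fun n => ‖a n‖).radius) :
    Summable fun n => ‖S n * a n‖ := by
  have hsum := (ofScalars ℝ fun n => ‖a n‖).summable_norm_mul_pow hσ
  simp only [ofScalars_norm, norm_norm, Real.coe_toNNReal _ hσ₀] at hsum
  refine (hsum.mul_left C).of_nonneg_of_le (fun n => norm_nonneg _) fun n => ?_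
  calc ‖S n * a n‖ ≤ ‖S n‖ * ‖a n‖ := norm_mul_le _ _
    _ ≤ C * σ ^ n * ‖a n‖ := by gcongr; exact hS n
    _ = C * (‖a n‖ * σ ^ n) := by ring

theorem tendsto_zero_of_tendsto_sum_range [SeminormedAddCommGroup A] {f : ℕ → A} {l : A}
    (h : Tendsto (fun N => ∑ n ∈ Finset.range N, f n) atTop (nhds l)) :
    Tendsto f atTop (nhds 0) := by
  simpa [Finset.sum_range_succ] using (h.comp (tendsto_add_atTop_nat 1)).sub h

theorem not_tendsto_sum_of_le_norm [SeminormedRing A] [NormMulClass A] {S a : ℕ → A} {c σ : ℝ}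
    (hc : 0 < c) (hS : ∀ᶠ n in atTop, c * σ ^ n ≤ ‖S n‖)
    (hσ : (ofScalars ℝ fun n => ‖a n‖).radius < ENNReal.ofReal σ) :
    ¬ ∃ l, Tendsto (fun N => ∑ n ∈ Finset.range N, S n * a n) atTop (nhds l) := by
  rintro ⟨l, hl⟩
  have hσ₀ : 0 ≤ σ := by
    by_contra! h
    simp [ENNReal.ofReal_of_nonpos h.le] at hσ
  have hsmall :=
    NormedAddGroup.tendsto_nhds_zero.mp (tendsto_zero_of_tendsto_sum_range hl) 1 one_pos
  refine hσ.not_ge ((ofScalars ℝ fun n => ‖a n‖).le_radius_of_eventually_le (1 / c) ?_)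
  filter_upwards [hS, hsmall] with n hSn hn
  simp only [ofScalars_norm, norm_norm, Real.coe_toNNReal _ hσ₀]
  rw [le_div_iff₀ hc]
  calc ‖a n‖ * σ ^ n * c = c * σ ^ n * ‖a n‖ := by ring
    _ ≤ ‖S n‖ * ‖a n‖ := by gcongr
    _ = ‖S n * a n‖ := (norm_mul _ _).symm
    _ ≤ 1 := hn.le

end CauchyHadamard

section StarPow

theorem binomSeq_eq_coeff (p : ℍ) (k : ℕ) : binomSeq p k = (X - C p).coeff k := by
  rcases k with _ | _ | k <;> simp [binomSeq, coeff_X, coeff_C]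

theorem convPow_binomSeq_eq_coeff (p : ℍ) (n k : ℕ) :
    convPow (binomSeq p) n k = ((X - C p) ^ n).coeff k := by
  induction n generalizing k with
  | zero => simp [convPow, coeff_one]
  | succ n ih =>
    simp only [convPow, conv, pow_succ, coeff_mul, ih, binomSeq_eq_coeff,
      Finset.Nat.sum_antidiagonal_eq_sum_range_succ_mk]

theorem starPow_eq_sum (p q : ℍ) (n : ℕ) :
    starPow p n q = ∑ k ∈ Finset.range (n + 1), n.choose k • (q ^ k * (-p) ^ (n - k)) := by
  simp only [starPow, convPow_binomSeq_eq_coeff, sub_eq_add_neg, ← C_neg, coeff_X_add_C_pow,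
    nsmul_eq_mul', mul_assoc]

theorem starPow_of_commute {p q : ℍ} (h : Commute q p) (n : ℕ) : starPow p n q = (q - p) ^ n := by
  rw [starPow_eq_sum, sub_eq_add_neg, h.neg_right.add_pow]
  simp only [nsmul_eq_mul']

theorem sum_choose_smul_eq_sub_pow (z w : ℂ) (n : ℕ) :
    ∑ k ∈ Finset.range (n + 1), n.choose k • (z ^ k * (-w) ^ (n - k)) = (z - w) ^ n := by
  simp [sub_eq_add_neg, add_pow, nsmul_eq_mul, mul_comm]

end StarPow

section ImaginaryUnit

variable {I J : ℍ}

theorem norm_eq_one_of_mul_self_eq_neg_one (hI : I * I = -1) : ‖I‖ = 1 := by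
  have h : ‖I‖ * ‖I‖ = 1 := by rw [← norm_mul, hI, norm_neg, norm_one]
  nlinarith [norm_nonneg I]

theorem re_eq_zero_of_mul_self_eq_neg_one (hI : I * I = -1) : I.re = 0 := by
  rw [← Quaternion.sq_eq_neg_normSq, Quaternion.normSq_eq_norm_mul_self,
    norm_eq_one_of_mul_self_eq_neg_one hI, sq, hI]
  simp

theorem star_liftAux (hI : I * I = -1) (z : ℂ) :
    star (Complex.liftAux I hI z) = Complex.liftAux I hI (conj z) := by
  simp [Complex.liftAux_apply, Quaternion.star_eq_neg.mpr (re_eq_zero_of_mul_self_eq_neg_one hI)]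

theorem norm_liftAux (hI : I * I = -1) (z : ℂ) : ‖Complex.liftAux I hI z‖ = ‖z‖ := by
  have h : Quaternion.normSq (Complex.liftAux I hI z) = Complex.normSq z := by
    rw [← Quaternion.coe_inj, ← Quaternion.self_mul_star, star_liftAux, ← map_mul, Complex.mul_conj]
    exact (Complex.liftAux I hI).commutes _
  rw [Quaternion.normSq_eq_norm_mul_self, Complex.normSq_eq_norm_sq, sq] at h
  nlinarith [norm_nonneg z, norm_nonneg (Complex.liftAux I hI z)]

theorem commute_liftAux (hI : I * I = -1) (z : ℂ) : Commute I (Complex.liftAux I hI z) := by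
  simpa using (Commute.all Complex.I z).map (Complex.liftAux I hI)

theorem eq_or_eq_neg_of_commute (hI : I * I = -1) (hJ : J * J = -1) (h : Commute I J) :
    J = I ∨ J = -I := by
  have hIJ : (I * J) * (I * J) = 1 := by
    calc (I * J) * (I * J) = I * (J * I) * J := by noncomm_ring
      _ = (I * I) * (J * J) := by rw [← h.eq]; noncomm_ring
      _ = 1 := by rw [hI, hJ]; norm_num
  have hJ' : J = -(I * (I * J)) := by rw [← mul_assoc, hI]; simp
  rcases mul_self_eq_one_iff.mp hIJ with h1 | h1
  · right; rw [hJ', h1, mul_one]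
  · left; rw [hJ', h1]; simp

theorem liftAux_apply_mk (hI : I * I = -1) (a b : ℝ) :
    Complex.liftAux I hI ⟨a, b⟩ = (a : ℍ) + b • I :=
  Complex.liftAux_apply I hI _

theorem liftAux_mk_zero (hI : I * I = -1) (a : ℝ) : Complex.liftAux I hI ⟨a, 0⟩ = a := by
  rw [liftAux_apply_mk, zero_smul, add_zero]

theorem liftAux_neg (hI : I * I = -1) (hI' : -I * -I = -1) (z : ℂ) :
    Complex.liftAux (-I) hI' z = Complex.liftAux I hI (conj z) := by
  simp [Complex.liftAux_apply]

theorem sameLine_liftAux (hI : I * I = -1) (z w : ℂ) :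
    SameLine (Complex.liftAux I hI z) (Complex.liftAux I hI w) :=
  ⟨I, sq I ▸ hI, ⟨z.re, z.im, liftAux_apply_mk hI _ _⟩, ⟨w.re, w.im, liftAux_apply_mk hI _ _⟩⟩

theorem liftAux_mul_liftAux (hI : I * I = -1) (hJ : J * J = -1) (a u : ℂ) :
    Complex.liftAux I hI a * Complex.liftAux J hJ u =
      Complex.liftAux I hI (a * ((u + conj u) / 2)) +
        Complex.liftAux I hI (a * ((u - conj u) / (2 * Complex.I))) * J := by
  rw [← Complex.re_eq_add_conj, ← Complex.im_eq_sub_conj, map_mul, map_mul,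
    Complex.liftAux_apply J]
  simp [Complex.liftAux_apply I, mul_add, Algebra.smul_def, mul_assoc]

theorem starPow_liftAux (hI : I * I = -1) (hJ : J * J = -1) (z w : ℂ) (n : ℕ) :
    starPow (Complex.liftAux J hJ w) n (Complex.liftAux I hI z) =
      Complex.liftAux I hI (((z - w) ^ n + (z - conj w) ^ n) / 2) +
        Complex.liftAux I hI (((z - w) ^ n - (z - conj w) ^ n) / (2 * Complex.I)) * J := by
  have hconj : (z - conj w) ^ n =
      ∑ k ∈ Finset.range (n + 1), n.choose k • (z ^ k * conj ((-w) ^ (n - k))) := by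
    simp [← sum_choose_smul_eq_sub_pow]
  have hre : ∑ k ∈ Finset.range (n + 1),
        n.choose k • z ^ k * (((-w) ^ (n - k) + conj ((-w) ^ (n - k))) / 2)
      = ((z - w) ^ n + (z - conj w) ^ n) / 2 := by
    rw [← sum_choose_smul_eq_sub_pow, hconj, ← Finset.sum_add_distrib, Finset.sum_div]
    refine Finset.sum_congr rfl fun k _ => ?_
    simp only [nsmul_eq_mul]; ring
  have him : ∑ k ∈ Finset.range (n + 1),
        n.choose k • z ^ k * (((-w) ^ (n - k) - conj ((-w) ^ (n - k))) / (2 * Complex.I))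
      = ((z - w) ^ n - (z - conj w) ^ n) / (2 * Complex.I) := by
    rw [← sum_choose_smul_eq_sub_pow, hconj, ← Finset.sum_sub_distrib, Finset.sum_div]
    refine Finset.sum_congr rfl fun k _ => ?_
    simp only [nsmul_eq_mul]; ring
  simp only [starPow_eq_sum, ← map_neg, ← map_pow, liftAux_mul_liftAux, smul_add, ← smul_mul_assoc,
    ← map_nsmul, Finset.sum_add_distrib, ← Finset.sum_mul, ← map_sum]
  rw [hre, him]

theorem norm_liftAux_add_liftAux_mul_le (hI : I * I = -1) (hJ : J * J = -1) (E F : ℂ) :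
    ‖Complex.liftAux I hI E + Complex.liftAux I hI F * J‖ ≤ ‖E‖ + ‖F‖ := by
  calc _ ≤ ‖Complex.liftAux I hI E‖ + ‖Complex.liftAux I hI F * J‖ := norm_add_le _ _
    _ = ‖E‖ + ‖F‖ := by
      rw [norm_mul, norm_eq_one_of_mul_self_eq_neg_one hJ, norm_liftAux, norm_liftAux, mul_one]

theorem norm_add_mul_mul_mul_norm_le_two_mul_norm (hI : I * I = -1) (E F : ℂ) :
    ‖J + I * J * I‖ * ‖F‖ ≤ 2 * ‖Complex.liftAux I hI E + Complex.liftAux I hI F * J‖ := by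
  set x := Complex.liftAux I hI E + Complex.liftAux I hI F * J
  have hx : x + I * x * I = Complex.liftAux I hI F * (J + I * J * I) := by
    calc x + I * x * I
        = Complex.liftAux I hI E + Complex.liftAux I hI F * J + (I * Complex.liftAux I hI E) * I
            + (I * Complex.liftAux I hI F) * J * I := by simp only [x]; noncomm_ring
      _ = Complex.liftAux I hI E * (1 + I * I) + Complex.liftAux I hI F * (J + I * J * I) := by
          rw [(commute_liftAux hI E).eq, (commute_liftAux hI F).eq]; noncomm_ring
      _ = _ := by rw [hI]; simp
  calc ‖J + I * J * I‖ * ‖F‖ = ‖x + I * x * I‖ := by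
        rw [hx, norm_mul, norm_liftAux, mul_comm]
    _ ≤ ‖x‖ + ‖I * x * I‖ := norm_add_le _ _
    _ = 2 * ‖x‖ := by
        rw [norm_mul, norm_mul, norm_eq_one_of_mul_self_eq_neg_one hI]; ring

theorem norm_starPow_liftAux_le (hI : I * I = -1) (hJ : J * J = -1) (z w : ℂ) (n : ℕ) :
    ‖starPow (Complex.liftAux J hJ w) n (Complex.liftAux I hI z)‖ ≤
      ‖z - w‖ ^ n + ‖z - conj w‖ ^ n := by
  rw [starPow_liftAux]
  refine (norm_liftAux_add_liftAux_mul_le hI hJ _ _).trans ?_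
  have h₁ := norm_add_le ((z - w) ^ n) ((z - conj w) ^ n)
  have h₂ := norm_sub_le ((z - w) ^ n) ((z - conj w) ^ n)
  simp only [norm_div, norm_mul, norm_pow, Complex.norm_I, Complex.norm_two] at h₁ h₂ ⊢
  linarith

theorem norm_starPow_liftAux_ge (hI : I * I = -1) (hJ : J * J = -1) (z w : ℂ) (n : ℕ) :
    ‖J + I * J * I‖ / 4 * (‖z - conj w‖ ^ n - ‖z - w‖ ^ n) ≤
      ‖starPow (Complex.liftAux J hJ w) n (Complex.liftAux I hI z)‖ := by
  rw [starPow_liftAux]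
  have h₁ := norm_add_mul_mul_mul_norm_le_two_mul_norm (J := J) hI
    (((z - w) ^ n + (z - conj w) ^ n) / 2) (((z - w) ^ n - (z - conj w) ^ n) / (2 * Complex.I))
  have h₂ := norm_sub_norm_le ((z - conj w) ^ n) ((z - w) ^ n)
  rw [norm_sub_rev] at h₂
  rw [norm_div, norm_mul, Complex.norm_I, Complex.norm_two, mul_one] at h₁
  simp only [norm_pow] at h₂
  nlinarith [norm_nonneg (J + I * J * I)]

end ImaginaryUnit

section SigmaBall

theorem commute_of_sameLine {q p : ℍ} (h : SameLine q p) : Commute q p := by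
  obtain ⟨I, hI, ⟨a, b, rfl⟩, ⟨c, d, rfl⟩⟩ := h
  rw [sq] at hI
  rw [← liftAux_apply_mk hI, ← liftAux_apply_mk hI]
  exact (Commute.all _ _).map _

theorem exists_eq_liftAux (q : ℍ) :
    ∃ (I : ℍ) (hI : I * I = -1), q = Complex.liftAux I hI ⟨q.re, ‖q.im‖⟩ := by
  by_cases hq : q.im = 0
  · refine ⟨Quaternion.ofComplex Complex.I,
      by rw [← map_mul, Complex.I_mul_I, map_neg, map_one], ?_⟩
    rw [liftAux_apply_mk, hq, norm_zero, zero_smul, add_zero]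
    exact (Quaternion.re_add_im q).symm.trans (by rw [hq, add_zero])
  · have hn : ‖q.im‖ ≠ 0 := norm_ne_zero_iff.mpr hq
    have hI : (‖q.im‖⁻¹ • q.im) * (‖q.im‖⁻¹ • q.im) = -1 := by
      rw [smul_mul_smul_comm, ← sq q.im, Quaternion.sq_eq_neg_normSq.mpr (Quaternion.re_im q),
        Quaternion.normSq_eq_norm_mul_self, smul_neg, ← Quaternion.coe_smul, smul_eq_mul,
        show ‖q.im‖⁻¹ * ‖q.im‖⁻¹ * (‖q.im‖ * ‖q.im‖) = 1 by field_simp, Quaternion.coe_one]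
    refine ⟨_, hI, ?_⟩
    rw [liftAux_apply_mk, smul_smul, mul_inv_cancel₀ hn, one_smul, Quaternion.re_add_im]

theorem norm_sub_lt_norm_sub_conj {z w : ℂ} (hz : 0 < z.im) (hw : 0 < w.im) :
    ‖z - w‖ < ‖z - conj w‖ := by
  rw [Complex.norm_def, Complex.norm_def]
  apply Real.sqrt_lt_sqrt (Complex.normSq_nonneg _)
  simp only [Complex.normSq_apply, Complex.sub_re, Complex.sub_im, Complex.conj_re,
    Complex.conj_im]
  nlinarith

theorem exists_liftAux_of_not_sameLine {q p : ℍ} (h : ¬ SameLine q p) :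
    ∃ (I J : ℍ) (hI : I * I = -1) (hJ : J * J = -1) (z w : ℂ),
      q = Complex.liftAux I hI z ∧ p = Complex.liftAux J hJ w ∧ J + I * J * I ≠ 0 ∧
        ‖z - w‖ < ‖z - conj w‖ ∧ sigmaDist q p = ‖z - conj w‖ := by
  obtain ⟨I, hI, hq⟩ := exists_eq_liftAux q
  obtain ⟨J, hJ, hp⟩ := exists_eq_liftAux p
  refine ⟨I, J, hI, hJ, _, _, hq, hp, fun h₀ => h ?_, norm_sub_lt_norm_sub_conj ?_ ?_, ?_⟩
  · have hIJ : Commute I J := by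
      calc I * J = I * -(I * J * I) := by rw [← eq_neg_of_add_eq_zero_left h₀]
        _ = -(I * I) * J * I := by noncomm_ring
        _ = J * I := by rw [hI, neg_neg, one_mul]
    rw [hq, hp]
    rcases eq_or_eq_neg_of_commute hI hJ hIJ with rfl | rfl
    · exact sameLine_liftAux hI _ _
    · rw [liftAux_neg hI]
      exact sameLine_liftAux hI _ _
  · refine (norm_nonneg _).lt_of_ne fun h₀ => h ?_
    rw [hq, hp, ← h₀, liftAux_mk_zero, ← liftAux_mk_zero hJ]
    exact sameLine_liftAux hJ _ _
  · refine (norm_nonneg _).lt_of_ne fun h₀ => h ?_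
    rw [hq, hp, ← h₀, liftAux_mk_zero, ← liftAux_mk_zero hI]
    exact sameLine_liftAux hI _ _
  · rw [sigmaDist, if_neg h, omegaDist, Complex.norm_def, Complex.normSq_apply]
    congr 1
    simp only [Complex.sub_re, Complex.sub_im, Complex.conj_re, Complex.conj_im]
    ring

theorem sigmaDist_nonneg (q p : ℍ) : 0 ≤ sigmaDist q p := by
  unfold sigmaDist omegaDist
  split_ifs
  exacts [norm_nonneg _, Real.sqrt_nonneg _]

theorem norm_starPow_of_sameLine {q p : ℍ} (h : SameLine q p) (n : ℕ) :
    ‖starPow p n q‖ = sigmaDist q p ^ n := by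
  rw [sigmaDist, if_pos h, starPow_of_commute (commute_of_sameLine h), norm_pow]

theorem norm_starPow_le (p q : ℍ) (n : ℕ) : ‖starPow p n q‖ ≤ 2 * sigmaDist q p ^ n := by
  by_cases h : SameLine q p
  · rw [norm_starPow_of_sameLine h]
    linarith [pow_nonneg (sigmaDist_nonneg q p) n]
  · obtain ⟨I, J, hI, hJ, z, w, rfl, rfl, -, hlt, hσ⟩ := exists_liftAux_of_not_sameLine h
    rw [hσ, two_mul]
    grw [norm_starPow_liftAux_le, hlt]

theorem exists_pos_eventually_le_norm_starPow (p q : ℍ) :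
    ∃ c > 0, ∀ᶠ n in atTop, c * sigmaDist q p ^ n ≤ ‖starPow p n q‖ := by
  by_cases h : SameLine q p
  · exact ⟨1, one_pos, .of_forall fun n => by rw [one_mul, norm_starPow_of_sameLine h]⟩
  · obtain ⟨I, J, hI, hJ, z, w, rfl, rfl, hIJ, hlt, hσ⟩ := exists_liftAux_of_not_sameLine h
    refine ⟨‖J + I * J * I‖ / 8, by positivity, ?_⟩
    filter_upwards [(isLittleO_pow_pow_of_lt_left (norm_nonneg _) hlt).bound one_half_pos]
      with n hn
    have := norm_starPow_liftAux_ge hI hJ z w n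
    rw [Real.norm_of_nonneg (by positivity), Real.norm_of_nonneg (by positivity)] at hn
    rw [hσ]
    nlinarith [norm_nonneg (J + I * J * I)]

end SigmaBall

theorem regular_series_convergence (a : ℕ → ℍ) (R : ENNReal)
    (hR : R⁻¹ = Filter.limsup (fun n : ℕ => ((‖a n‖₊ : ENNReal)) ^ (1/(n:ℝ))) Filter.atTop)
    (p : ℍ) :
    (∀ q : ℍ, ENNReal.ofReal (sigmaDist q p) < R →
      Summable (fun n : ℕ => ‖starPow p n q * a n‖)) ∧
    (∀ q : ℍ, R < ENNReal.ofReal (sigmaDist q p) →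
      ¬ ∃ l : ℍ, Filter.Tendsto (fun N : ℕ => ∑ n ∈ Finset.range N, starPow p n q * a n)
        Filter.atTop (nhds l)) := by
  have hradius := radius_ofScalars_norm_eq hR
  refine ⟨fun q hq => ?_, fun q hq => ?_⟩
  · exact summable_norm_mul_of_norm_le_pow (norm_starPow_le p q) (sigmaDist_nonneg q p)
      (hradius ▸ hq)
  · obtain ⟨c, hc, hle⟩ := exists_pos_eventually_le_norm_starPow p q
    exact not_tendsto_sum_of_le_norm hc hle (hradius ▸ hq)
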